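/- With J, B, B⊥, E± as above, the equality B_ℂ/B⊥_ℂ = E'₊ + E'₋ holds if and only if B = (B ∩ JB) + B⊥. -/

import Mathlib

open Module LinearMap TensorProduct

set_option maxSynthPendingDepth 3

/-- The symmetric pairing `⟨X+ξ, Y+η⟩ = (ξ(Y) + η(X))/2` on `V ⊕ V*`. -/
noncomputable def pair (V : Type) [AddCommGroup V] [Module ℝ V] :
    LinearMap.BilinForm ℝ (V × Module.Dual ℝ V) :=
  LinearMap.mk₂ ℝ (fun u v => (u.2 v.1 + v.2 u.1) / 2)
    (by intro m₁ m₂ n; simp; ring)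
    (by intro c m n; simp [smul_eq_mul]; ring)
    (by intro m n₁ n₂; simp; ring)
    (by intro c m n; simp [smul_eq_mul]; ring)

/-- The `μ`-eigenspace of the complexification of `J` in `(V ⊕ V*) ⊗ ℂ`. -/
noncomputable def eig (V : Type) [AddCommGroup V] [Module ℝ V]
    (J : (V × Module.Dual ℝ V) →ₗ[ℝ] (V × Module.Dual ℝ V)) (μ : ℂ) :
    Submodule ℂ (ℂ ⊗[ℝ] (V × Module.Dual ℝ V)) where
  carrier := {u | J.baseChange ℂ u = μ • u}
  add_mem' := by
    intro a b ha hb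
    simp only [Set.mem_setOf_eq, map_add] at *
    rw [ha, hb, smul_add]
  zero_mem' := by simp
  smul_mem' := by
    intro c u hu
    simp only [Set.mem_setOf_eq, map_smul] at *
    rw [hu, smul_comm]

section Aux

variable {M : Type*} [AddCommGroup M] [Module ℝ M]

/-- Real part map. -/
noncomputable def reT (M : Type*) [AddCommGroup M] [Module ℝ M] :
    ℂ ⊗[ℝ] M →ₗ[ℝ] M :=
  TensorProduct.lift ((LinearMap.lsmul ℝ M).comp Complex.reLm)

noncomputable def imT (M : Type*) [AddCommGroup M] [Module ℝ M] :
    ℂ ⊗[ℝ] M →ₗ[ℝ] M :=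
  TensorProduct.lift ((LinearMap.lsmul ℝ M).comp Complex.imLm)

@[simp] lemma reT_tmul (z : ℂ) (m : M) : reT _ (z ⊗ₜ m) = z.re • m := rfl
@[simp] lemma imT_tmul (z : ℂ) (m : M) : imT _ (z ⊗ₜ m) = z.im • m := rfl

lemma reIm_decomp (u : ℂ ⊗[ℝ] M) :
    u = (1:ℂ) ⊗ₜ (reT _ u) + Complex.I • ((1:ℂ) ⊗ₜ (imT _ u)) := by
  induction u using TensorProduct.induction_on with
  | zero => simp
  | tmul z m =>
      have h1 : (1:ℂ) ⊗ₜ[ℝ] (z.re • m) = (z.re : ℂ) ⊗ₜ[ℝ] m := by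
        rw [TensorProduct.tmul_smul, TensorProduct.smul_tmul', Complex.real_smul, mul_one]
      have h2 : Complex.I • ((1:ℂ) ⊗ₜ[ℝ] (z.im • m))
          = ((z.im : ℂ) * Complex.I) ⊗ₜ[ℝ] m := by
        rw [TensorProduct.tmul_smul, smul_comm, TensorProduct.smul_tmul',
          TensorProduct.smul_tmul', smul_eq_mul, mul_one, Complex.real_smul]
      simp only [reT_tmul, imT_tmul, h1, h2, ← TensorProduct.add_tmul, Complex.re_add_im]
  | add x y hx hy =>
      rw [map_add, map_add, TensorProduct.tmul_add, TensorProduct.tmul_add, smul_add]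
      conv_lhs => rw [hx, hy]
      abel

lemma reT_smul (c : ℂ) (u : ℂ ⊗[ℝ] M) :
    reT _ (c • u) = c.re • reT _ u - c.im • imT _ u := by
  induction u using TensorProduct.induction_on with
  | zero => simp
  | tmul z m =>
      rw [TensorProduct.smul_tmul']
      simp [smul_eq_mul, Complex.mul_re, sub_smul, smul_smul]
  | add x y hx hy => simp only [smul_add, map_add, hx, hy]; abel

lemma imT_smul (c : ℂ) (u : ℂ ⊗[ℝ] M) :
    imT _ (c • u) = c.re • imT _ u + c.im • reT _ u := by
  induction u using TensorProduct.induction_on with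
  | zero => simp
  | tmul z m =>
      rw [TensorProduct.smul_tmul']
      simp [smul_eq_mul, Complex.mul_im, add_smul, smul_smul, add_comm]
  | add x y hx hy => simp only [smul_add, map_add, hx, hy]; abel

lemma reT_baseChange (f : M →ₗ[ℝ] M) (u : ℂ ⊗[ℝ] M) :
    reT _ (f.baseChange ℂ u) = f (reT _ u) := by
  induction u using TensorProduct.induction_on with
  | zero => simp
  | tmul z m => simp
  | add x y hx hy => simp [hx, hy]

lemma imT_baseChange (f : M →ₗ[ℝ] M) (u : ℂ ⊗[ℝ] M) :
    imT _ (f.baseChange ℂ u) = f (imT _ u) := by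
  induction u using TensorProduct.induction_on with
  | zero => simp
  | tmul z m => simp
  | add x y hx hy => simp [hx, hy]

lemma mem_baseChange_iff (p : Submodule ℝ M) (u : ℂ ⊗[ℝ] M) :
    u ∈ p.baseChange ℂ ↔ reT _ u ∈ p ∧ imT _ u ∈ p := by
  constructor
  · intro hu
    rw [Submodule.baseChange_eq_span] at hu
    refine Submodule.span_induction ?_ ?_ ?_ ?_ hu
    · intro x hx
      obtain ⟨m, hm, rfl⟩ := Submodule.mem_map.mp hx
      simp only [TensorProduct.mk_apply, reT_tmul, imT_tmul, Complex.one_re,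
        Complex.one_im, one_smul, zero_smul]
      exact ⟨hm, p.zero_mem⟩
    · simp
    · intro x y _ _ hx hy
      simp only [map_add]
      exact ⟨p.add_mem hx.1 hy.1, p.add_mem hx.2 hy.2⟩
    · intro c x _ hx
      rw [reT_smul, imT_smul]
      exact ⟨p.sub_mem (p.smul_mem _ hx.1) (p.smul_mem _ hx.2),
        p.add_mem (p.smul_mem _ hx.2) (p.smul_mem _ hx.1)⟩
  · rintro ⟨h1, h2⟩
    rw [reIm_decomp u]
    exact Submodule.add_mem _ (Submodule.tmul_mem_baseChange_of_mem 1 h1)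
      (Submodule.smul_mem _ _ (Submodule.tmul_mem_baseChange_of_mem 1 h2))

end Aux

lemma mem_eig_iff (V : Type) [AddCommGroup V] [Module ℝ V]
    (J : (V × Module.Dual ℝ V) →ₗ[ℝ] (V × Module.Dual ℝ V)) (μ : ℂ)
    (u : ℂ ⊗[ℝ] (V × Module.Dual ℝ V)) :
    u ∈ eig V J μ ↔ J.baseChange ℂ u = μ • u := Iff.rfl

set_option maxHeartbeats 2000000 in
/-- Let `J` be a linear generalized complex structure on `V ⊕ V*` with
`±i`-eigenspaces `E±`, and `B` a coisotropic subspace (`B⊥ ⊆ B`).  Let `E'±`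
be the images of `E± ∩ B_ℂ` in the quotient by `B⊥_ℂ`.  Then
`B_ℂ/B⊥_ℂ = E'₊ + E'₋` holds if and only if `B = (B ∩ JB) + B⊥`. -/
theorem reduced_eigenspaces_span_iff
    (V : Type) [AddCommGroup V] [Module ℝ V] [FiniteDimensional ℝ V]
    (J : (V × Module.Dual ℝ V) →ₗ[ℝ] (V × Module.Dual ℝ V))
    (hJ2 : ∀ u, J (J u) = -u)
    (horth : ∀ u v, pair V (J u) (J v) = pair V u v)
    (B : Submodule ℝ (V × Module.Dual ℝ V))
    (hco : (pair V).orthogonal B ≤ B) :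
    (Submodule.map (((pair V).orthogonal B).baseChange ℂ).mkQ
        (eig V J Complex.I ⊓ B.baseChange ℂ) ⊔
     Submodule.map (((pair V).orthogonal B).baseChange ℂ).mkQ
        (eig V J (-Complex.I) ⊓ B.baseChange ℂ) =
      Submodule.map (((pair V).orthogonal B).baseChange ℂ).mkQ (B.baseChange ℂ)) ↔
    (B = (B ⊓ Submodule.map J B) ⊔ (pair V).orthogonal B) := by
  set W := (pair V).orthogonal B with hW
  set Q := (W.baseChange ℂ).mkQ with hQ
  have hJ2c : ∀ u : ℂ ⊗[ℝ] (V × Module.Dual ℝ V),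
      J.baseChange ℂ (J.baseChange ℂ u) = -u := by
    intro u
    induction u using TensorProduct.induction_on with
    | zero => simp
    | tmul z m => simp [hJ2, TensorProduct.tmul_neg]
    | add x y hx hy => rw [map_add, map_add, hx, hy]; abel
  have hQ0 : ∀ u : ℂ ⊗[ℝ] (V × Module.Dual ℝ V), u ∈ W.baseChange ℂ → Q u = 0 := by
    intro u hu
    rwa [hQ, Submodule.mkQ_apply, Submodule.Quotient.mk_eq_zero]
  constructor
  · -- (6) → (7)
    intro h
    refine le_antisymm ?_ (sup_le inf_le_left hco)
    intro b hb
    have h1 : Q ((1:ℂ) ⊗ₜ b) ∈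
        Submodule.map Q (eig V J Complex.I ⊓ B.baseChange ℂ) ⊔
        Submodule.map Q (eig V J (-Complex.I) ⊓ B.baseChange ℂ) := by
      rw [h]
      exact Submodule.mem_map_of_mem (Submodule.tmul_mem_baseChange_of_mem 1 hb)
    obtain ⟨y, hy, z, hz, hsum⟩ := Submodule.mem_sup.mp h1
    obtain ⟨ep, ⟨heigp, hepB⟩, rfl⟩ := Submodule.mem_map.mp hy
    obtain ⟨em, ⟨heigm, hemB⟩, rfl⟩ := Submodule.mem_map.mp hz
    replace heigp : J.baseChange ℂ ep = Complex.I • ep := heigp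
    replace heigm : J.baseChange ℂ em = (-Complex.I) • em := heigm
    have hw : (1:ℂ) ⊗ₜ[ℝ] b - ep - em ∈ W.baseChange ℂ := by
      have h0 : Q ((1:ℂ) ⊗ₜ[ℝ] b - ep - em) = 0 := by
        rw [map_sub, map_sub, ← hsum]; abel
      rwa [hQ, Submodule.mkQ_apply, Submodule.Quotient.mk_eq_zero] at h0
    have hxB : ep + em ∈ B.baseChange ℂ := add_mem hepB hemB
    have hJx : J.baseChange ℂ (ep + em) ∈ B.baseChange ℂ := by
      rw [map_add, heigp, heigm]
      exact add_mem (Submodule.smul_mem _ _ hepB) (Submodule.smul_mem _ _ hemB)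
    have hrB : reT _ (ep + em) ∈ B := ((mem_baseChange_iff B _).mp hxB).1
    have hJr : J (reT _ (ep + em)) ∈ B := by
      rw [← reT_baseChange]
      exact ((mem_baseChange_iff B _).mp hJx).1
    have hrJB : reT _ (ep + em) ∈ Submodule.map J B :=
      ⟨-(J (reT _ (ep + em))), neg_mem hJr, by rw [map_neg, hJ2, neg_neg]⟩
    have hwre : reT _ ((1:ℂ) ⊗ₜ[ℝ] b - ep - em) ∈ W :=
      ((mem_baseChange_iff W _).mp hw).1
    have hb_eq : b = reT _ (ep + em) + reT _ ((1:ℂ) ⊗ₜ[ℝ] b - ep - em) := by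
      rw [map_sub, map_sub, map_add, reT_tmul]
      simp only [Complex.one_re, one_smul]
      abel
    exact Submodule.mem_sup.mpr ⟨_, ⟨hrB, hrJB⟩, _, hwre, hb_eq.symm⟩
  · -- (7) → (6)
    intro h
    refine le_antisymm
      (sup_le (Submodule.map_mono inf_le_right) (Submodule.map_mono inf_le_right)) ?_
    intro x hx
    obtain ⟨u, hu, rfl⟩ := Submodule.mem_map.mp hx
    have hre : reT _ u ∈ (B ⊓ Submodule.map J B) ⊔ W :=
      h ▸ ((mem_baseChange_iff B u).mp hu).1
    have him : imT _ u ∈ (B ⊓ Submodule.map J B) ⊔ W :=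
      h ▸ ((mem_baseChange_iff B u).mp hu).2
    obtain ⟨c₁, hc₁, w₁, hw₁, hre_eq⟩ := Submodule.mem_sup.mp hre
    obtain ⟨c₂, hc₂, w₂, hw₂, him_eq⟩ := Submodule.mem_sup.mp him
    set c : ℂ ⊗[ℝ] (V × Module.Dual ℝ V) := (1:ℂ) ⊗ₜ c₁ + Complex.I • ((1:ℂ) ⊗ₜ c₂) with hc_def
    set w : ℂ ⊗[ℝ] (V × Module.Dual ℝ V) := (1:ℂ) ⊗ₜ w₁ + Complex.I • ((1:ℂ) ⊗ₜ w₂) with hw_def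
    have hu_eq : u = c + w := by
      conv_lhs => rw [reIm_decomp u]
      rw [← hre_eq, ← him_eq, hc_def, hw_def, TensorProduct.tmul_add,
        TensorProduct.tmul_add, smul_add]
      abel
    have hcB : c ∈ B.baseChange ℂ :=
      add_mem (Submodule.tmul_mem_baseChange_of_mem 1 hc₁.1)
        (Submodule.smul_mem _ _ (Submodule.tmul_mem_baseChange_of_mem 1 hc₂.1))
    have hwW : w ∈ W.baseChange ℂ :=
      add_mem (Submodule.tmul_mem_baseChange_of_mem 1 hw₁)
        (Submodule.smul_mem _ _ (Submodule.tmul_mem_baseChange_of_mem 1 hw₂))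
    -- J of elements of B ⊓ JB lies in B
    have hJBmem : ∀ x ∈ B ⊓ Submodule.map J B, J x ∈ B := by
      rintro x ⟨-, y, hy, rfl⟩
      rw [hJ2]
      exact neg_mem hy
    have hcInf : c ∈ (B ⊓ Submodule.map J B).baseChange ℂ :=
      add_mem (Submodule.tmul_mem_baseChange_of_mem 1 hc₁)
        (Submodule.smul_mem _ _ (Submodule.tmul_mem_baseChange_of_mem 1 hc₂))
    have hJcB : J.baseChange ℂ c ∈ B.baseChange ℂ := by
      refine (mem_baseChange_iff B _).mpr ⟨?_, ?_⟩
      · rw [reT_baseChange]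
        exact hJBmem _ ((mem_baseChange_iff _ c).mp hcInf).1
      · rw [imT_baseChange]
        exact hJBmem _ ((mem_baseChange_iff _ c).mp hcInf).2
    -- eigenvector decomposition of c
    set Jc := J.baseChange ℂ c with hJc_def
    set ep : ℂ ⊗[ℝ] (V × Module.Dual ℝ V) := (1/2 : ℂ) • (c - Complex.I • Jc) with hep
    set em : ℂ ⊗[ℝ] (V × Module.Dual ℝ V) := (1/2 : ℂ) • (c + Complex.I • Jc) with hem
    clear_value c w Jc ep em
    have hsum : ep + em = c := by
      rw [hep, hem, ← smul_add]
      have : c - Complex.I • Jc + (c + Complex.I • Jc) = (2:ℂ) • c := by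
        rw [two_smul]; abel
      rw [this, smul_smul]
      norm_num
    have heigp : ep ∈ eig V J Complex.I := by
      rw [mem_eig_iff, hep, map_smul, map_sub, map_smul, hJc_def, hJ2c, ← hJc_def,
        smul_neg, sub_neg_eq_add]
      rw [smul_comm, smul_sub, smul_smul, Complex.I_mul_I, neg_smul, one_smul,
        sub_neg_eq_add, add_comm]
    have heigm : em ∈ eig V J (-Complex.I) := by
      rw [mem_eig_iff, hem, map_smul, map_add, map_smul, hJc_def, hJ2c, ← hJc_def, smul_neg,
        smul_comm (-Complex.I) ((1:ℂ)/2), smul_add (-Complex.I) c,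
        smul_smul (-Complex.I) Complex.I, neg_mul, Complex.I_mul_I, neg_neg, one_smul]
      congr 1
      rw [neg_smul]
      abel
    have hepB : ep ∈ B.baseChange ℂ := by
      rw [hep]
      exact Submodule.smul_mem _ _ (sub_mem hcB (Submodule.smul_mem _ _ hJcB))
    have hemB : em ∈ B.baseChange ℂ := by
      rw [hem]
      exact Submodule.smul_mem _ _ (add_mem hcB (Submodule.smul_mem _ _ hJcB))
    refine Submodule.mem_sup.mpr
      ⟨Q ep, Submodule.mem_map_of_mem ⟨heigp, hepB⟩,
       Q em, Submodule.mem_map_of_mem ⟨heigm, hemB⟩, ?_⟩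
    rw [← map_add, hsum, hu_eq, map_add, hQ0 w hwW, add_zero]
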